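/- Let R be a commutative ring containing ℚ, δ a derivation of R, and I a δ-invariant ideal. Then every minimal prime ideal over I is δ-invariant. -/
import Mathlib

private lemma nat_cancel_mem {R : Type*} [CommRing R] [Algebra ℚ R] {I : Ideal R} {n : ℕ}
    (hn : n ≠ 0) {z : R} (h : (n : R) * z ∈ I) : z ∈ I := by
  have h1 : algebraMap ℚ R ((n : ℚ)⁻¹) * ((n : R) * z) = z := by
    rw [← mul_assoc]
    have h2 : algebraMap ℚ R ((n : ℚ)⁻¹) * (n : R) = 1 := by
      rw [show ((n : R)) = algebraMap ℚ R (n : ℚ) by simp, ← map_mul,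
        inv_mul_cancel₀ (by exact_mod_cast hn)]
      simp
    rw [h2, one_mul]
  rw [← h1]
  exact I.mul_mem_left _ h

private lemma exists_mul_pow_mem {R : Type*} [CommRing R] {I P : Ideal R}
    (hP : P ∈ I.minimalPrimes) {x : R} (hx : x ∈ P) :
    ∃ s ∉ P, ∃ n : ℕ, s * x ^ n ∈ I := by
  by_contra hcon
  push_neg at hcon
  haveI hPp : P.IsPrime := hP.1.1
  have h1P : (1 : R) ∉ P := fun h => hPp.ne_top ((Ideal.eq_top_iff_one P).mpr h)
  set M : Submonoid R :=
    { carrier := {r | ∃ s ∉ P, ∃ n : ℕ, r = s * x ^ n}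
      one_mem' := ⟨1, h1P, 0, by ring⟩
      mul_mem' := by
        rintro a b ⟨s, hs, n, rfl⟩ ⟨t, ht, m, rfl⟩
        exact ⟨s * t, fun h => ((hPp.mem_or_mem h).elim hs ht), n + m, by ring⟩ } with hM
  have hdisj : Disjoint (I : Set R) (M : Set R) := by
    rw [Set.disjoint_left]
    rintro r hrI ⟨s, hs, n, rfl⟩
    exact hcon s hs n hrI
  obtain ⟨Q, hQp, hIQ, hQdisj⟩ := Ideal.exists_le_prime_disjoint I M hdisj
  have hQP : Q ≤ P := by
    intro a haQ
    by_contra haP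
    exact Set.disjoint_left.mp hQdisj haQ ⟨a, haP, 0, by ring⟩
  have hPQ : P ≤ Q := hP.2 ⟨hQp, hIQ⟩ hQP
  exact Set.disjoint_left.mp hQdisj (hPQ hx) ⟨1, h1P, 1, by ring⟩

theorem stmt_1 (R : Type*) [CommRing R] [Algebra ℚ R] (δ : Derivation ℚ R R)
    (I : Ideal R) (hI : ∀ x ∈ I, δ x ∈ I) :
    ∀ P ∈ I.minimalPrimes, ∀ x ∈ P, δ x ∈ P := by
  intro P hP x hx
  haveI hPp : P.IsPrime := hP.1.1
  have hIP : I ≤ P := hP.1.2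
  obtain ⟨s, hs, n, hsx⟩ := exists_mul_pow_mem hP hx
  have hn : n ≠ 0 := by
    rintro rfl
    exact hs (hIP (by simpa using hsx))
  have key : ∀ k : ℕ, 1 ≤ k → k ≤ n →
      ∃ t, t ∉ P ∧ t * (x ^ (n - k) * (δ x) ^ (2 * k - 1)) ∈ I := by
    intro k hk1
    induction k, hk1 using Nat.le_induction with
    | base =>
      intro _
      refine ⟨s * s, fun h => ((hPp.mem_or_mem h).elim hs hs), ?_⟩
      have e : ((n : ℕ) : R) * (s * s * (x ^ (n - 1) * (δ x) ^ (2 * 1 - 1))) =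
          s * δ (s * x ^ n) - δ s * (s * x ^ n) := by
        rw [Derivation.leibniz, Derivation.leibniz_pow]
        simp only [smul_eq_mul, nsmul_eq_mul, show 2 * 1 - 1 = 1 from rfl, pow_one]
        ring
      have h2 : ((n : ℕ) : R) * (s * s * (x ^ (n - 1) * (δ x) ^ (2 * 1 - 1))) ∈ I := by
        rw [e]
        exact I.sub_mem (I.mul_mem_left s (hI _ hsx)) (I.mul_mem_left _ hsx)
      exact nat_cancel_mem hn h2
    | succ k hk ih =>
      intro hkn
      obtain ⟨t, htP, htI⟩ := ih (le_trans (Nat.le_succ k) hkn)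
      obtain ⟨c, hc⟩ : ∃ c, n - k = c + 1 :=
        ⟨n - (k + 1), by omega⟩
      obtain ⟨d, hd⟩ : ∃ d, 2 * k - 1 = d + 1 :=
        ⟨2 * k - 2, by omega⟩
      have hc' : n - (k + 1) = c := by omega
      have hd' : 2 * (k + 1) - 1 = d + 3 := by omega
      rw [hc, hd] at htI
      rw [hc', hd']
      refine ⟨t * t, fun h => ((hPp.mem_or_mem h).elim htP htP), ?_⟩
      have e : (((c + 1 : ℕ)) : R) * (t * t * (x ^ c * (δ x) ^ (d + 3))) =
          (t * δ x) * δ (t * (x ^ (c + 1) * (δ x) ^ (d + 1)))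
            - (δ t * δ x) * (t * (x ^ (c + 1) * (δ x) ^ (d + 1)))
            - (((d + 1 : ℕ)) : R) * ((t * δ (δ x)) * (t * (x ^ (c + 1) * (δ x) ^ (d + 1)))) := by
        rw [Derivation.leibniz, Derivation.leibniz, Derivation.leibniz_pow,
          Derivation.leibniz_pow]
        simp only [smul_eq_mul, nsmul_eq_mul, Nat.add_sub_cancel, Nat.cast_add, Nat.cast_one]
        ring
      have h2 : (((c + 1 : ℕ)) : R) * (t * t * (x ^ c * (δ x) ^ (d + 3))) ∈ I := by
        rw [e]
        exact I.sub_mem (I.sub_mem (I.mul_mem_left _ (hI _ htI)) (I.mul_mem_left _ htI))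
          (I.mul_mem_left _ (I.mul_mem_left _ htI))
      exact nat_cancel_mem (Nat.succ_ne_zero c) h2
  obtain ⟨t, htP, htI⟩ := key n (Nat.one_le_iff_ne_zero.mpr hn) le_rfl
  rw [Nat.sub_self, pow_zero, one_mul] at htI
  have hyP : t * (δ x) ^ (2 * n - 1) ∈ P := hIP htI
  rcases hPp.mem_or_mem hyP with h | h
  · exact absurd h htP
  · exact hPp.mem_of_pow_mem _ h
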